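/- arXiv:2012.10216 — 2 statements merged into one kernel-verified Lean document; each statement's English description precedes it below -/
import Mathlib

section
/- Corollary (PF for imperfect groups): Let N be a finite set with n = |N| > 0, g ⊆ N nonempty, and v : N → (0,1]. Suppose that for every subset T ⊆ N that is perfectly classifiable, (1/|T|)∑_{i∈T} v(i) ≥ |T|/n. Let T* ⊆ g be a largest perfectly classifiable subset of g, and let β = |T*|/|g| (the best achievable accuracy on g). Then (1/|g|)∑_{i∈g} v(i) ≥ (|g|/n)·β². -/
open Finset

lemma inv_card_mul_sum_mul_card_div_le_of_subset {α : Type*} {T g : Finset α} {v : α → ℝ}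
    (hTg : T ⊆ g) (hT : T.Nonempty) (hv : ∀ i ∈ g, 0 ≤ v i) :
    (1 / (T.card : ℝ) * ∑ i ∈ T, v i) * ((T.card : ℝ) / g.card) ≤
      1 / (g.card : ℝ) * ∑ i ∈ g, v i := by
  have hTcard : (T.card : ℝ) ≠ 0 := by exact_mod_cast hT.card_pos.ne'
  calc (1 / (T.card : ℝ) * ∑ i ∈ T, v i) * ((T.card : ℝ) / g.card)
      = 1 / (g.card : ℝ) * ∑ i ∈ T, v i := by field_simp
    _ ≤ 1 / (g.card : ℝ) * ∑ i ∈ g, v i := by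
      gcongr
      exact fun i hi _ => hv i hi

theorem stmt_5_general {α : Type*} (N : Finset α) (n : ℕ)
    (g : Finset α) (hgN : g ⊆ N) (hgne : g.Nonempty)
    (v : α → ℝ) (hv : ∀ i ∈ N, 0 < v i ∧ v i ≤ 1)
    (PerfClass : Finset α → Prop)
    (hPF : ∀ T : Finset α, T ⊆ N → PerfClass T → T.Nonempty →
      (1 / (T.card : ℝ)) * ∑ i ∈ T, v i ≥ (T.card : ℝ) / n)
    (Tstar : Finset α) (hTg : Tstar ⊆ g) (hTperf : PerfClass Tstar)
    (hTne : Tstar.Nonempty)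
    (β : ℝ) (hβ : β = (Tstar.card : ℝ) / g.card) :
    (1 / (g.card : ℝ)) * ∑ i ∈ g, v i ≥ ((g.card : ℝ) / n) * β ^ 2 := by
  have hgcard : (g.card : ℝ) ≠ 0 := by exact_mod_cast hgne.card_pos.ne'
  calc ((g.card : ℝ) / n) * β ^ 2 = ((Tstar.card : ℝ) / n) * ((Tstar.card : ℝ) / g.card) := by
        rw [hβ]; field_simp
    _ ≤ (1 / (Tstar.card : ℝ) * ∑ i ∈ Tstar, v i) * ((Tstar.card : ℝ) / g.card) := by
        gcongr
        exact hPF Tstar (hTg.trans hgN) hTperf hTne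
    _ ≤ 1 / (g.card : ℝ) * ∑ i ∈ g, v i :=
        inv_card_mul_sum_mul_card_div_le_of_subset hTg hTne fun i hi => (hv i (hgN hi)).1.le

/-- PF corollary for imperfect groups: if every perfectly
classifiable subset T gets average utility ≥ |T|/n, then any group g gets
average utility ≥ (|g|/n)·β², where β = |T*|/|g| and T* is a largest perfectly
classifiable subset of g. -/
theorem stmt_5 {α : Type*} [DecidableEq α] (N : Finset α) (n : ℕ) (hn : N.card = n)
    (hnpos : 0 < n) (g : Finset α) (hgN : g ⊆ N) (hgne : g.Nonempty)
    (v : α → ℝ) (hv : ∀ i ∈ N, 0 < v i ∧ v i ≤ 1)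
    (PerfClass : Finset α → Prop)
    (hPF : ∀ T : Finset α, T ⊆ N → PerfClass T → T.Nonempty →
      (1 / (T.card : ℝ)) * ∑ i ∈ T, v i ≥ (T.card : ℝ) / n)
    (Tstar : Finset α) (hTg : Tstar ⊆ g) (hTperf : PerfClass Tstar)
    (hTne : Tstar.Nonempty)
    (hTmax : ∀ T : Finset α, T ⊆ g → PerfClass T → T.card ≤ Tstar.card)
    (β : ℝ) (hβ : β = (Tstar.card : ℝ) / g.card) :
    (1 / (g.card : ℝ)) * ∑ i ∈ g, v i ≥ ((g.card : ℝ) / n) * β ^ 2 :=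
  stmt_5_general N n g hgN hgne v hv PerfClass hPF Tstar hTg hTperf hTne β hβ
end

section
/- Tightness example for Greedy (Example 3): Let k ≥ 1 and n = k(k+1)/2. In the instance with data points {(j,i) : j ∈ [k], i ∈ [k-j+1]} and classifiers h_1 (covering {(1,i) : i ∈ [k]}), h_j for j = 2..k (covering {(j,i) : i ∈ [k-j+1]} ∪ {(1,j)}), and h_{k+1} (covering {(1,1)}), each of h_2, ..., h_{k+1} covers exactly one point of S = {(1,i) : i ∈ [k]}. Consequently, if a randomized classifier puts zero probability on h_1 and distributes probability among h_2,...,h_{k+1} with probabilities proportional to the new points covered in the greedy rounds (probability (k-j+1)/n on h_{j+1} for j = 1..k), then its average accuracy on S equals (1/k)·∑_{j=1}^k (k-j+1)/n = 1/k = (α/2)·((k+1)/k), where α = |S|/n = k/n = 2/(k+1). -/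
/-! The reversed sum `∑_{j=1}^k (k - j + 1)` is the triangular number `k(k+1)/2 = n`, so the
probabilities `(k - j + 1)/n` sum to one; and each `h_j` with `j ≥ 2` meets the row
`S = {(1,i)}` in the single point `(1,j)`, because the rest of its cover lies in another row. -/

open Finset

theorem sum_Icc_natCast_eq (k : ℕ) : ∑ j ∈ Icc 1 k, (j : ℝ) = k * (k + 1) / 2 := by
  induction k with
  | zero => simp
  | succ m ih =>
    rw [sum_Icc_succ_top (by omega), ih]
    push_cast
    ring

theorem sum_Icc_sub_add_one_eq (k : ℕ) :
    ∑ j ∈ Icc 1 k, ((k : ℝ) - j + 1) = k * (k + 1) / 2 := by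
  rw [sum_add_distrib, sum_sub_distrib, sum_Icc_natCast_eq]
  simp only [sum_const, Nat.card_Icc, add_tsub_cancel_right, nsmul_eq_mul, mul_one]
  ring

theorem Nat.cast_mul_succ_div_two (k : ℕ) :
    ((k * (k + 1) / 2 : ℕ) : ℝ) = k * (k + 1) / 2 := by
  rw [Nat.cast_div (Nat.even_mul_succ_self k).two_dvd two_ne_zero]
  push_cast
  ring

theorem card_inter_union_singleton_eq_one {α : Type*} [DecidableEq α] {s t : Finset α} {a : α}
    (hst : Disjoint s t) (ha : a ∈ s) : (s ∩ (t ∪ {a})).card = 1 := by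
  rw [inter_union_distrib_left, disjoint_iff_inter_eq_empty.mp hst, empty_union,
    inter_singleton_of_mem ha, card_singleton]

theorem disjoint_image_prodMk {α β : Type*} [DecidableEq α] [DecidableEq β] {a b : α}
    (hab : a ≠ b) (s t : Finset β) :
    Disjoint (s.image fun i => (a, i)) (t.image fun i => (b, i)) := by
  simp only [disjoint_left, mem_image]
  rintro _ ⟨i, -, rfl⟩ ⟨j, -, h⟩
  exact hab (Prod.ext_iff.mp h).1.symm

/-- Tightness example for Greedy (Example 3): each of
h_2, ..., h_{k+1} covers exactly one point of S = {(1,i) : i ∈ [k]}, and the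
resulting randomized classifier's average accuracy on S equals 1/k
= (α/2)·((k+1)/k) where α = k/n and n = k(k+1)/2. -/
theorem stmt_14 (k : ℕ) (hk : 1 ≤ k) (n : ℕ) (hn : n = k * (k + 1) / 2)
    (S : Finset (ℕ × ℕ)) (hS : S = (Finset.Icc 1 k).image (fun i => (1, i)))
    (cover : ℕ → Finset (ℕ × ℕ))
    (hcov : ∀ j, 2 ≤ j → j ≤ k →
      cover j = (Finset.Icc 1 (k - j + 1)).image (fun i => (j, i)) ∪ {(1, j)})
    (hcovlast : cover (k + 1) = {(1, 1)})
    (α : ℝ) (hα : α = (k : ℝ) / n) :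
    (∀ j, 2 ≤ j → j ≤ k + 1 → (S ∩ cover j).card = 1) ∧
    (1 / (k : ℝ)) * ∑ j ∈ Finset.Icc 1 k, (((k : ℝ) - j + 1) / n) = 1 / (k : ℝ) ∧
    (1 : ℝ) / k = (α / 2) * (((k : ℝ) + 1) / k) := by
  have hnR : (n : ℝ) = k * (k + 1) / 2 := by rw [hn, Nat.cast_mul_succ_div_two]
  have hkR : (k : ℝ) ≠ 0 := by positivity
  have hnR0 : (n : ℝ) ≠ 0 := by rw [hnR]; positivity
  refine ⟨fun j hj2 hjk => ?_, ?_, ?_⟩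
  · rw [hS]
    obtain hjk | rfl := Nat.le_succ_iff.mp hjk
    · rw [hcov j hj2 hjk]
      exact card_inter_union_singleton_eq_one (disjoint_image_prodMk (by omega) _ _)
        (mem_image_of_mem _ (mem_Icc.mpr ⟨by omega, hjk⟩))
    · rw [hcovlast, inter_singleton_of_mem (mem_image_of_mem _ (mem_Icc.mpr ⟨le_rfl, hk⟩)),
        card_singleton]
  · rw [← sum_div, sum_Icc_sub_add_one_eq, ← hnR, div_self hnR0, mul_one]
  · rw [hα, hnR]
    field_simp
end
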